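/- arXiv:1805.04896 — 2 statements merged into one kernel-verified Lean document; each statement's English description precedes it below -/
import Mathlib

section
/- Let n ≥ 1 and let e, ẽ, ρ, ρ̃ ∈ ℤⁿ satisfy ⟨e,ρ⟩ = ⟨ẽ,ρ̃⟩ = −1. Then the identity ⟨m,ρ̃⟩·⟨ẽ,ρ⟩ = ⟨m,ρ⟩·⟨e,ρ̃⟩ holds for all m ∈ ℤⁿ if and only if either ⟨ẽ,ρ⟩ = ⟨e,ρ̃⟩ = 0, or ρ = ρ̃ (and in the latter case necessarily ⟨ẽ,ρ⟩ = ⟨e,ρ̃⟩ = −1). -/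
/-! Testing the identity at `m = e` and `m = e'` gives `ab = -a` and `ab = -b` for
`a = ⟨e',ρ⟩`, `b = ⟨e,ρ'⟩`, so `a = b ∈ {0, -1}`; when `a = b = -1` the identity says that
`ρ` and `ρ'` define the same linear form, hence are equal. -/

/-- standard pairing `⟨m,v⟩ = Σᵢ mᵢ vᵢ` on `ℤⁿ`. -/
def pairZ {n : ℕ} (m v : Fin n → ℤ) : ℤ := ∑ i, m i * v i

open Matrix

lemma pairZ_eq_dotProduct {n : ℕ} (m v : Fin n → ℤ) : pairZ m v = m ⬝ᵥ v := rfl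

lemma forall_pairZ_mul_eq_iff {n : ℕ} (v w : Fin n → ℤ) (a b : ℤ) :
    (∀ m, pairZ m v * a = pairZ m w * b) ↔ a • v = b • w := by
  simp_rw [← dotProduct_eq_iff, pairZ_eq_dotProduct, smul_dotProduct, smul_eq_mul,
    dotProduct_comm _ v, dotProduct_comm _ w, mul_comm _ a, mul_comm _ b]

lemma eq_zero_or_eq_neg_one_of_mul_eq_neg {R : Type*} [CommRing R] [NoZeroDivisors R]
    {a b : R} (hba : b * a = -b) (hab : a * b = -a) :
    (a = 0 ∧ b = 0) ∨ (a = -1 ∧ b = -1) := by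
  obtain rfl : a = b := by linear_combination hab - hba
  have : a * (a + 1) = 0 := by linear_combination hab
  rcases mul_eq_zero.mp this with h | h
  · exact .inl ⟨h, h⟩
  · have : a = -1 := eq_neg_of_add_eq_zero_left h
    exact .inr ⟨this, this⟩

theorem vertical_commuting_combinatorial_core_general
    {n : ℕ} (e e' ρ ρ' : Fin n → ℤ)
    (he : pairZ e ρ = -1) (he' : pairZ e' ρ' = -1) :
    (∀ m : Fin n → ℤ, pairZ m ρ' * pairZ e' ρ = pairZ m ρ * pairZ e ρ')
    ↔ (pairZ e' ρ = 0 ∧ pairZ e ρ' = 0)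
      ∨ (ρ = ρ' ∧ pairZ e' ρ = -1 ∧ pairZ e ρ' = -1) := by
  constructor
  · intro h
    have at_e := h e
    have at_e' := h e'
    rw [he, neg_one_mul] at at_e
    rw [he', neg_one_mul] at at_e'
    rcases eq_zero_or_eq_neg_one_of_mul_eq_neg at_e at_e'.symm with hzero | ⟨ha, hb⟩
    · exact .inl hzero
    · rw [ha, hb, forall_pairZ_mul_eq_iff, neg_smul, neg_smul, one_smul, one_smul, neg_inj] at h
      exact .inr ⟨h.symm, ha, hb⟩
  · rintro (⟨ha, hb⟩ | ⟨rfl, ha, hb⟩) m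
    · rw [ha, hb, mul_zero, mul_zero]
    · rw [ha, hb]

theorem vertical_commuting_combinatorial_core
    {n : ℕ} (hn : 1 ≤ n) (e e' ρ ρ' : Fin n → ℤ)
    (he : pairZ e ρ = -1) (he' : pairZ e' ρ' = -1) :
    (∀ m : Fin n → ℤ, pairZ m ρ' * pairZ e' ρ = pairZ m ρ * pairZ e ρ')
    ↔ (pairZ e' ρ = 0 ∧ pairZ e ρ' = 0)
      ∨ (ρ = ρ' ∧ pairZ e' ρ = -1 ∧ pairZ e ρ' = -1) :=
  vertical_commuting_combinatorial_core_general e e' ρ ρ' he he'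
end

section
/- For all e, ρ ∈ ℤⁿ, φ ∈ F, ẽ ∈ ℤⁿ, s ∈ ℤ, d a positive integer, u ∈ ℤⁿ and m ∈ ℤⁿ, the commutator of the vertical-type derivation D_{e,ρ,φ} and the simple horizontal-type derivation E_{ẽ,s,d,u} satisfies [D_{e,ρ,φ}, E_{ẽ,s,d,u}](χ^m) = d·( v₀(m)·⟨ẽ,ρ⟩·φ − ⟨m,ρ⟩·(φ′·t + φ·v₀(e)) )·t^s·χ^{m+e+ẽ}, where v₀(x) = ⟨x,u⟩/d. -/
/- STATEMENT 5: commutator of a vertical-type derivation `D_{e,ρ,φ}` and a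
simple horizontal-type derivation `E_{e',s,d,u}` applied to `χ^m`:
`[D,E](χ^m) = d·(v₀(m)·⟨e',ρ⟩·φ − ⟨m,ρ⟩·(φ′·t + φ·v₀(e)))·t^s·χ^{m+e+e'}`,
where `v₀(x) = ⟨x,u⟩/d`. -/

noncomputable section

/-- derivative `f ↦ df/dt` of a rational function `f ∈ K(t)`. -/
def rderiv {K : Type*} [Field K] (φ : RatFunc K) : RatFunc K :=
  (algebraMap (Polynomial K) (RatFunc K) (Polynomial.derivative φ.num)
      * algebraMap (Polynomial K) (RatFunc K) φ.denom
    - algebraMap (Polynomial K) (RatFunc K) φ.num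
      * algebraMap (Polynomial K) (RatFunc K) (Polynomial.derivative φ.denom))
    / (algebraMap (Polynomial K) (RatFunc K) φ.denom) ^ 2

/-- Vertical-type derivation `D_{e,ρ,φ}` on the group algebra `B = K(t)[ℤⁿ]`,
determined by `f·χ^m ↦ ⟨m,ρ⟩·φ·f·χ^{m+e}`. -/
def Dvert {K : Type*} [Field K] {n : ℕ} (e ρ : Fin n → ℤ) (φ : RatFunc K)
    (b : (Fin n → ℤ) →₀ RatFunc K) : (Fin n → ℤ) →₀ RatFunc K :=
  b.sum fun m f => Finsupp.single (m + e) ((pairZ m ρ : RatFunc K) * φ * f)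

/-- Simple horizontal-type derivation `E_{e',s,d,u}` on `B = K(t)[ℤⁿ]`,
determined by `f·χ^m ↦ t^s·(⟨m,u⟩·f + d·t·f′)·χ^{m+e'}`. -/
def Ehor {K : Type*} [Field K] {n : ℕ} (e' : Fin n → ℤ) (s : ℤ) (d : ℤ)
    (u : Fin n → ℤ) (b : (Fin n → ℤ) →₀ RatFunc K) : (Fin n → ℤ) →₀ RatFunc K :=
  b.sum fun m f => Finsupp.single (m + e')
    ((RatFunc.X : RatFunc K) ^ s
      * ((pairZ m u : RatFunc K) * f + (d : RatFunc K) * RatFunc.X * rderiv f))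

/-! Both sides are supported on the single monomial `χ^{m+e+e'}`, so the claim reduces
to an identity in `K(t)`. The only input beyond ring arithmetic is that `rderiv` commutes with constants,
which follows from the quotient rule holding for every (not necessarily reduced) representation
`p / q` of a rational function. -/

lemma pairZ_add_left {n : ℕ} (m m' v : Fin n → ℤ) :
    pairZ (m + m') v = pairZ m v + pairZ m' v := by
  simp [pairZ, add_mul, Finset.sum_add_distrib]

section rderiv

variable {K : Type*} [Field K]

local notation "ι" => algebraMap (Polynomial K) (RatFunc K)

lemma rderiv_zero : rderiv (0 : RatFunc K) = 0 := by
  simp [rderiv]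

lemma rderiv_one : rderiv (1 : RatFunc K) = 0 := by
  simp [rderiv]

lemma rderiv_algebraMap_div {p q : Polynomial K} (hq : q ≠ 0) :
    rderiv (ι p / ι q)
      = ι (Polynomial.derivative p * q - p * Polynomial.derivative q) / ι q ^ 2 := by
  set φ := ι p / ι q
  have hq' : ι q ≠ 0 := by simpa using hq
  have hdenom : ι φ.denom ≠ 0 := by simpa using φ.denom_ne_zero
  have hcross : φ.num * q = p * φ.denom := by
    have h := RatFunc.num_div_denom φ
    rw [div_eq_div_iff hdenom hq'] at h
    exact IsFractionRing.injective (Polynomial K) (RatFunc K) (by simpa only [map_mul] using h)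
  have hcross' := congrArg Polynomial.derivative hcross
  simp only [Polynomial.derivative_mul] at hcross'
  have key : (Polynomial.derivative φ.num * φ.denom - φ.num * Polynomial.derivative φ.denom)
        * q ^ 2
      = (Polynomial.derivative p * q - p * Polynomial.derivative q) * φ.denom ^ 2 := by
    linear_combination (φ.denom * q) * hcross'
      - (Polynomial.derivative q * φ.denom + Polynomial.derivative φ.denom * q) * hcross
  rw [rderiv, div_eq_div_iff (pow_ne_zero 2 hdenom) (pow_ne_zero 2 hq')]
  simpa only [map_mul, map_sub, map_pow] using congrArg ι key

lemma rderiv_algebraMap_mul (c : K) (φ : RatFunc K) :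
    rderiv (algebraMap K (RatFunc K) c * φ) = algebraMap K (RatFunc K) c * rderiv φ := by
  have hc : algebraMap K (RatFunc K) c = ι (Polynomial.C c) := by simp
  have hcφ : algebraMap K (RatFunc K) c * φ = ι (Polynomial.C c * φ.num) / ι φ.denom := by
    rw [map_mul, mul_div_assoc, RatFunc.num_div_denom, hc]
  conv_rhs => rw [← RatFunc.num_div_denom φ, rderiv_algebraMap_div φ.denom_ne_zero]
  rw [hcφ, rderiv_algebraMap_div φ.denom_ne_zero, Polynomial.derivative_C_mul, hc]
  simp only [map_mul, map_sub]
  ring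

lemma rderiv_intCast_mul (c : ℤ) (φ : RatFunc K) :
    rderiv ((c : RatFunc K) * φ) = (c : RatFunc K) * rderiv φ := by
  simpa only [map_intCast] using rderiv_algebraMap_mul (c : K) φ

end rderiv

section monomial

variable {K : Type*} [Field K] {n : ℕ}

lemma Dvert_single (e ρ : Fin n → ℤ) (φ : RatFunc K) (m : Fin n → ℤ) (f : RatFunc K) :
    Dvert e ρ φ (Finsupp.single m f)
      = Finsupp.single (m + e) ((pairZ m ρ : RatFunc K) * φ * f) :=
  Finsupp.sum_single_index (by simp)

lemma Ehor_single (e' : Fin n → ℤ) (s d : ℤ) (u m : Fin n → ℤ) (f : RatFunc K) :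
    Ehor e' s d u (Finsupp.single m f) = Finsupp.single (m + e')
      ((RatFunc.X : RatFunc K) ^ s
        * ((pairZ m u : RatFunc K) * f + (d : RatFunc K) * RatFunc.X * rderiv f)) :=
  Finsupp.sum_single_index (by simp [rderiv_zero])

end monomial

theorem commutator_vertical_horizontal_on_chi_general
    {K : Type*} [Field K] [CharZero K] {n : ℕ}
    (e ρ : Fin n → ℤ) (φ : RatFunc K) (e' : Fin n → ℤ) (s : ℤ) (d : ℤ)
    (hd : 0 < d) (u : Fin n → ℤ) (m : Fin n → ℤ) :
    Dvert e ρ φ (Ehor e' s d u (Finsupp.single m (1 : RatFunc K)))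
      - Ehor e' s d u (Dvert e ρ φ (Finsupp.single m (1 : RatFunc K)))
    = Finsupp.single (m + e + e')
        ((d : RatFunc K)
          * (((pairZ m u : RatFunc K) / (d : RatFunc K)) * (pairZ e' ρ : RatFunc K) * φ
            - (pairZ m ρ : RatFunc K)
              * (rderiv φ * RatFunc.X + φ * ((pairZ e u : RatFunc K) / (d : RatFunc K))))
          * (RatFunc.X : RatFunc K) ^ s) := by
  have hd0 : (d : RatFunc K) ≠ 0 := by
    rw [← map_intCast (algebraMap K (RatFunc K)), map_ne_zero]
    exact Int.cast_ne_zero.mpr hd.ne'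
  simp only [Ehor_single, Dvert_single, rderiv_one, mul_one, rderiv_intCast_mul]
  rw [add_right_comm m e' e, ← Finsupp.single_sub]
  congr 1
  push_cast [pairZ_add_left]
  field_simp
  ring

theorem commutator_vertical_horizontal_on_chi
    {K : Type*} [Field K] [IsAlgClosed K] [CharZero K] {n : ℕ} (hn : 1 ≤ n)
    (e ρ : Fin n → ℤ) (φ : RatFunc K) (e' : Fin n → ℤ) (s : ℤ) (d : ℤ)
    (hd : 0 < d) (u : Fin n → ℤ) (m : Fin n → ℤ) :
    Dvert e ρ φ (Ehor e' s d u (Finsupp.single m (1 : RatFunc K)))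
      - Ehor e' s d u (Dvert e ρ φ (Finsupp.single m (1 : RatFunc K)))
    = Finsupp.single (m + e + e')
        ((d : RatFunc K)
          * (((pairZ m u : RatFunc K) / (d : RatFunc K)) * (pairZ e' ρ : RatFunc K) * φ
            - (pairZ m ρ : RatFunc K)
              * (rderiv φ * RatFunc.X + φ * ((pairZ e u : RatFunc K) / (d : RatFunc K))))
          * (RatFunc.X : RatFunc K) ^ s) :=
  commutator_vertical_horizontal_on_chi_general e ρ φ e' s d hd u m
end
end
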